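/- Let s : ℝ⁴ → ℝ be Lipschitz with constant K_s with respect to the ℓ^∞ norm on the set C of 2×2 nonnegative matrices with fixed row sums n⁻ and n⁺. If τ is a continuous random variable with cdf F, then E_τ[|s(CM(τ)) − s(CM̄_F)|] ≤ (K_s/2)(J_F + mad_τ[TN(τ)] + mad_τ[TP(τ)]), where J_F = E_τ[ | |TN(τ) − TN̄_F| − |TP(τ) − TP̄_F| | ] and mad denotes mean absolute deviation. -/

import Mathlib

open MeasureTheory

/-- Mean-absolute-deviation bound for a Lipschitz score:
`E_τ[|s(CM(τ)) − s(CM̄_F)|] ≤ (K_s/2)(J_F + mad[TN] + mad[TP])`. -/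
theorem lipschitz_score_mad_bound {n : ℕ} (y yh : Fin n → ℝ)
    (hy : ∀ i, y i = 0 ∨ y i = 1) (hyh : ∀ i, yh i ∈ Set.Ioo (0 : ℝ) 1)
    (μ : Measure ℝ) [IsProbabilityMeasure μ] (hcont : ∀ x : ℝ, μ {x} = 0)
    (F : ℝ → ℝ) (hF : ∀ x, F x = (μ (Set.Iic x)).toReal)
    (nneg npos : ℝ) (hnneg : nneg = ∑ i, (1 - y i)) (hnpos : npos = ∑ i, y i)
    (TN FP FN TP : ℝ → ℝ)
    (hTN : ∀ t, TN t = ∑ i, (1 - y i) * (if yh i < t then (1 : ℝ) else 0))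
    (hFP : ∀ t, FP t = ∑ i, (1 - y i) * (if yh i > t then (1 : ℝ) else 0))
    (hFN : ∀ t, FN t = ∑ i, y i * (if yh i < t then (1 : ℝ) else 0))
    (hTP : ∀ t, TP t = ∑ i, y i * (if yh i > t then (1 : ℝ) else 0))
    (TNb FPb FNb TPb : ℝ)
    (hTNb : TNb = ∑ i, (1 - y i) * (1 - F (yh i)))
    (hFPb : FPb = ∑ i, (1 - y i) * F (yh i))
    (hFNb : FNb = ∑ i, y i * (1 - F (yh i)))
    (hTPb : TPb = ∑ i, y i * F (yh i))
    (s : (Fin 4 → ℝ) → ℝ) (K : ℝ) (hK : 0 ≤ K)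
    (hLip : ∀ v w : Fin 4 → ℝ,
        ((∀ j, 0 ≤ v j) ∧ v 0 + v 1 = nneg ∧ v 2 + v 3 = npos) →
        ((∀ j, 0 ≤ w j) ∧ w 0 + w 1 = nneg ∧ w 2 + w 3 = npos) →
        |s v - s w| ≤ K * ⨆ j, |v j - w j|) :
    (∫ t, |s ![TN t, FP t, FN t, TP t] - s ![TNb, FPb, FNb, TPb]| ∂μ)
      ≤ (K / 2) * ((∫ t, abs (|TN t - TNb| - |TP t - TPb|) ∂μ)
          + (∫ t, |TN t - TNb| ∂μ) + (∫ t, |TP t - TPb| ∂μ)) := by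
  -- abbreviations
  set A : ℝ → ℝ := fun t => |TN t - TNb| with hA
  set B : ℝ → ℝ := fun t => |TP t - TPb| with hB
  -- basic bounds
  have hyb : ∀ i, 0 ≤ y i ∧ y i ≤ 1 := fun i => by rcases hy i with h | h <;> simp [h]
  have hFb : ∀ x, 0 ≤ F x ∧ F x ≤ 1 := by
    intro x
    rw [hF]
    constructor
    · exact ENNReal.toReal_nonneg
    · have h1 : μ (Set.Iic x) ≤ 1 := prob_le_one
      have := ENNReal.toReal_mono (by norm_num) h1
      simpa using this
  -- measurability of TN and TP
  have hTNm : Measurable TN := by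
    have : TN = fun t => ∑ i, (1 - y i) * (if yh i < t then (1 : ℝ) else 0) := funext hTN
    rw [this]
    exact Finset.measurable_sum _ fun i _ =>
      (Measurable.ite measurableSet_Ioi measurable_const measurable_const).const_mul _
  have hTPm : Measurable TP := by
    have : TP = fun t => ∑ i, y i * (if yh i > t then (1 : ℝ) else 0) := funext hTP
    rw [this]
    exact Finset.measurable_sum _ fun i _ =>
      (Measurable.ite measurableSet_Iio measurable_const measurable_const).const_mul _
  -- boundedness and integrability
  have hbd : ∀ (g : Fin n → ℝ) (t : ℝ) (P : Fin n → Prop) [DecidablePred P],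
      (∀ i, 0 ≤ g i ∧ g i ≤ 1) →
      |∑ i, g i * (if P i then (1 : ℝ) else 0)| ≤ (n : ℝ) := by
    intro g t P _ hg
    calc |∑ i, g i * (if P i then (1 : ℝ) else 0)|
        ≤ ∑ i, |g i * (if P i then (1 : ℝ) else 0)| := Finset.abs_sum_le_sum_abs _ _
      _ ≤ ∑ _i : Fin n, (1 : ℝ) := by
          refine Finset.sum_le_sum fun i _ => ?_
          rw [abs_mul]
          calc |g i| * |if P i then (1 : ℝ) else 0| ≤ 1 * 1 := by
                apply mul_le_mul
                · rw [abs_of_nonneg (hg i).1]; exact (hg i).2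
                · split <;> norm_num
                · positivity
                · norm_num
            _ = 1 := by norm_num
      _ = n := by simp
  have hTN_int : Integrable TN μ := by
    refine Integrable.mono' (integrable_const (n : ℝ)) hTNm.aestronglyMeasurable
      (Filter.Eventually.of_forall fun t => ?_)
    rw [hTN]
    exact hbd _ t _ fun i => ⟨by linarith [(hyb i).2], by linarith [(hyb i).1]⟩
  have hTP_int : Integrable TP μ := by
    refine Integrable.mono' (integrable_const (n : ℝ)) hTPm.aestronglyMeasurable
      (Filter.Eventually.of_forall fun t => ?_)
    rw [hTP]
    exact hbd _ t _ fun i => hyb i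
  have hA_int : Integrable A μ := (hTN_int.sub (integrable_const _)).abs
  have hB_int : Integrable B μ := (hTP_int.sub (integrable_const _)).abs
  have hAB_int : Integrable (fun t => |A t - B t|) μ := (hA_int.sub hB_int).abs
  have hg_int : Integrable (fun t => (K / 2) * (|A t - B t| + A t + B t)) μ :=
    (((hAB_int.add hA_int).add hB_int).const_mul _)
  -- nonnegativity of components
  have ind_nonneg : ∀ (P : Prop) [Decidable P], (0 : ℝ) ≤ if P then 1 else 0 := by
    intro P _; split <;> norm_num
  have hTN0 : ∀ t, 0 ≤ TN t := fun t => by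
    rw [hTN]; exact Finset.sum_nonneg fun i _ =>
      mul_nonneg (by linarith [(hyb i).2]) (ind_nonneg _)
  have hFP0 : ∀ t, 0 ≤ FP t := fun t => by
    rw [hFP]; exact Finset.sum_nonneg fun i _ =>
      mul_nonneg (by linarith [(hyb i).2]) (ind_nonneg _)
  have hFN0 : ∀ t, 0 ≤ FN t := fun t => by
    rw [hFN]; exact Finset.sum_nonneg fun i _ => mul_nonneg (hyb i).1 (ind_nonneg _)
  have hTP0 : ∀ t, 0 ≤ TP t := fun t => by
    rw [hTP]; exact Finset.sum_nonneg fun i _ => mul_nonneg (hyb i).1 (ind_nonneg _)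
  have hTNb0 : 0 ≤ TNb := by
    rw [hTNb]; exact Finset.sum_nonneg fun i _ =>
      mul_nonneg (by linarith [(hyb i).2]) (by linarith [(hFb (yh i)).2])
  have hFPb0 : 0 ≤ FPb := by
    rw [hFPb]; exact Finset.sum_nonneg fun i _ =>
      mul_nonneg (by linarith [(hyb i).2]) (hFb (yh i)).1
  have hFNb0 : 0 ≤ FNb := by
    rw [hFNb]; exact Finset.sum_nonneg fun i _ =>
      mul_nonneg (hyb i).1 (by linarith [(hFb (yh i)).2])
  have hTPb0 : 0 ≤ TPb := by
    rw [hTPb]; exact Finset.sum_nonneg fun i _ => mul_nonneg (hyb i).1 (hFb (yh i)).1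
  -- expected row sums
  have hw1 : TNb + FPb = nneg := by
    rw [hTNb, hFPb, hnneg, ← Finset.sum_add_distrib]
    exact Finset.sum_congr rfl fun i _ => by ring
  have hw2 : FNb + TPb = npos := by
    rw [hFNb, hTPb, hnpos, ← Finset.sum_add_distrib]
    exact Finset.sum_congr rfl fun i _ => by ring
  have hwC : (∀ j, 0 ≤ (![TNb, FPb, FNb, TPb] : Fin 4 → ℝ) j) ∧
      (![TNb, FPb, FNb, TPb] : Fin 4 → ℝ) 0 + (![TNb, FPb, FNb, TPb] : Fin 4 → ℝ) 1 = nneg ∧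
      (![TNb, FPb, FNb, TPb] : Fin 4 → ℝ) 2 + (![TNb, FPb, FNb, TPb] : Fin 4 → ℝ) 3 = npos := by
    refine ⟨fun j => ?_, by simpa using hw1, by simpa using hw2⟩
    fin_cases j <;> simpa using by first | exact hTNb0 | exact hFPb0 | exact hFNb0 | exact hTPb0
  -- a.e. the threshold avoids all yh i
  have hae : ∀ᵐ t ∂μ, ∀ i : Fin n, yh i ≠ t := by
    rw [ae_iff]
    have h0 : μ (⋃ i : Fin n, {yh i}) = 0 := measure_iUnion_null fun i => hcont _
    refine measure_mono_null (fun t ht => ?_) h0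
    simp only [Set.mem_setOf_eq, not_forall, not_not] at ht
    obtain ⟨i, hi⟩ := ht
    exact Set.mem_iUnion.mpr ⟨i, hi.symm⟩
  -- max identity
  have hmax : ∀ a b : ℝ, max a b = (|a - b| + a + b) / 2 := by
    intro a b
    rcases le_total a b with h | h
    · rw [max_eq_right h, abs_of_nonpos (by linarith)]; ring
    · rw [max_eq_left h, abs_of_nonneg (by linarith)]; ring
  -- pointwise a.e. bound
  have hptwise : ∀ᵐ t ∂μ,
      |s ![TN t, FP t, FN t, TP t] - s ![TNb, FPb, FNb, TPb]|
        ≤ (K / 2) * (|A t - B t| + A t + B t) := by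
    filter_upwards [hae] with t ht
    have hrow1 : TN t + FP t = nneg := by
      rw [hTN, hFP, hnneg, ← Finset.sum_add_distrib]
      refine Finset.sum_congr rfl fun i _ => ?_
      rcases lt_or_gt_of_ne (ht i) with h | h
      · rw [if_pos h, if_neg (asymm h)]; ring
      · rw [if_neg (asymm h), if_pos h]; ring
    have hrow2 : FN t + TP t = npos := by
      rw [hFN, hTP, hnpos, ← Finset.sum_add_distrib]
      refine Finset.sum_congr rfl fun i _ => ?_
      rcases lt_or_gt_of_ne (ht i) with h | h
      · rw [if_pos h, if_neg (asymm h)]; ring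
      · rw [if_neg (asymm h), if_pos h]; ring
    have hvC : (∀ j, 0 ≤ (![TN t, FP t, FN t, TP t] : Fin 4 → ℝ) j) ∧
        (![TN t, FP t, FN t, TP t] : Fin 4 → ℝ) 0 +
          (![TN t, FP t, FN t, TP t] : Fin 4 → ℝ) 1 = nneg ∧
        (![TN t, FP t, FN t, TP t] : Fin 4 → ℝ) 2 +
          (![TN t, FP t, FN t, TP t] : Fin 4 → ℝ) 3 = npos := by
      refine ⟨fun j => ?_, by simpa using hrow1, by simpa using hrow2⟩
      fin_cases j <;> simpa using by
        first | exact hTN0 t | exact hFP0 t | exact hFN0 t | exact hTP0 t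
    have hsup : (⨆ j, |(![TN t, FP t, FN t, TP t] : Fin 4 → ℝ) j -
        (![TNb, FPb, FNb, TPb] : Fin 4 → ℝ) j|) ≤ max (A t) (B t) := by
      apply ciSup_le
      intro j
      fin_cases j
      · exact le_max_left (A t) (B t)
      · have h1 : FP t - FPb = -(TN t - TNb) := by linarith
        have h2 : |FP t - FPb| ≤ max (A t) (B t) := by
          rw [h1, abs_neg]; exact le_max_left (A t) (B t)
        simpa using h2
      · have h1 : FN t - FNb = -(TP t - TPb) := by linarith
        have h2 : |FN t - FNb| ≤ max (A t) (B t) := by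
          rw [h1, abs_neg]; exact le_max_right (A t) (B t)
        simpa using h2
      · exact le_max_right (A t) (B t)
    calc |s ![TN t, FP t, FN t, TP t] - s ![TNb, FPb, FNb, TPb]|
        ≤ K * ⨆ j, |(![TN t, FP t, FN t, TP t] : Fin 4 → ℝ) j -
            (![TNb, FPb, FNb, TPb] : Fin 4 → ℝ) j| := hLip _ _ hvC hwC
      _ ≤ K * max (A t) (B t) := mul_le_mul_of_nonneg_left hsup hK
      _ = (K / 2) * (|A t - B t| + A t + B t) := by rw [hmax]; ring
  -- conclude
  calc (∫ t, |s ![TN t, FP t, FN t, TP t] - s ![TNb, FPb, FNb, TPb]| ∂μ)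
      ≤ ∫ t, (K / 2) * (|A t - B t| + A t + B t) ∂μ :=
        integral_mono_of_nonneg (Filter.Eventually.of_forall fun t => abs_nonneg _)
          hg_int hptwise
    _ = (K / 2) * ((∫ t, |A t - B t| ∂μ) + (∫ t, A t ∂μ) + (∫ t, B t ∂μ)) := by
        rw [integral_const_mul]
        congr 1
        have h1 : Integrable (fun t => |A t - B t| + A t) μ := hAB_int.add hA_int
        rw [integral_add h1 hB_int, integral_add hAB_int hA_int]
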